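/- The function F(v) = (8/(3π)) · v · ₂F₁(1/2, 1/2; 5/2; v²) is convex on [0,1]. -/
import Mathlib


open Real

/-- The Gaussian hypergeometric function `₂F₁(a,b;c;z)` as a power series. -/
noncomputable def hyp2F1 (a b c z : ℝ) : ℝ :=
  ∑' j : ℕ, ((ascPochhammer ℝ j).eval a * (ascPochhammer ℝ j).eval b
    / ((ascPochhammer ℝ j).eval c * (Nat.factorial j))) * z ^ j

/-- `F(v) = (8/(3π)) v ₂F₁(1/2,1/2;5/2;v²)`. -/
noncomputable def Fqmc (v : ℝ) : ℝ :=
  (8 / (3 * Real.pi)) * v * hyp2F1 (1 / 2) (1 / 2) (5 / 2) (v ^ 2)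

/-- coefficient of the series -/
noncomputable def cj (j : ℕ) : ℝ :=
  (ascPochhammer ℝ j).eval (1/2 : ℝ) * (ascPochhammer ℝ j).eval (1/2 : ℝ)
    / ((ascPochhammer ℝ j).eval (5/2 : ℝ) * (Nat.factorial j))

lemma poch_half_pos (j : ℕ) : 0 < (ascPochhammer ℝ j).eval (1/2 : ℝ) :=
  ascPochhammer_pos j _ (by norm_num)

lemma poch_five_half_pos (j : ℕ) : 0 < (ascPochhammer ℝ j).eval (5/2 : ℝ) :=
  ascPochhammer_pos j _ (by norm_num)

lemma cj_nonneg (j : ℕ) : 0 ≤ cj j := by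
  have h1 := poch_half_pos j
  have h2 := poch_five_half_pos j
  have h3 : (0:ℝ) < (Nat.factorial j : ℝ) := by positivity
  unfold cj
  positivity

lemma poch_half_le_factorial (j : ℕ) :
    (ascPochhammer ℝ j).eval (1/2 : ℝ) ≤ (Nat.factorial j : ℝ) := by
  induction j with
  | zero => simp
  | succ n ih =>
    rw [ascPochhammer_succ_eval, Nat.factorial_succ, Nat.cast_mul]
    have h1 := poch_half_pos n
    have h2 : (1/2 : ℝ) + n ≤ (n : ℝ) + 1 := by linarith
    have h3 : (0:ℝ) ≤ (1/2 : ℝ) + n := by positivity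
    calc (ascPochhammer ℝ n).eval (1/2 : ℝ) * ((1/2 : ℝ) + n)
        ≤ (Nat.factorial n : ℝ) * ((n:ℝ) + 1) := by
          apply mul_le_mul ih h2 h3 (by positivity)
      _ = ((n:ℝ) + 1) * (Nat.factorial n : ℝ) := by ring
      _ = ((n + 1 : ℕ) : ℝ) * (Nat.factorial n : ℝ) := by push_cast; ring

lemma poch_identity (j : ℕ) :
    (3/4 : ℝ) * (ascPochhammer ℝ j).eval (5/2 : ℝ)
      = (ascPochhammer ℝ j).eval (1/2 : ℝ) * (((j:ℝ) + 1/2) * ((j:ℝ) + 3/2)) := by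
  induction j with
  | zero => norm_num
  | succ n ih =>
    rw [ascPochhammer_succ_eval, ascPochhammer_succ_eval]
    push_cast
    nlinarith [ih]

lemma cj_le (j : ℕ) : cj j ≤ 1 / ((j:ℝ) + 1) ^ 2 := by
  have h1 := poch_half_pos j
  have h2 := poch_five_half_pos j
  have h3 : (0:ℝ) < (Nat.factorial j : ℝ) := by exact_mod_cast j.factorial_pos
  have h4 := poch_half_le_factorial j
  have h5 := poch_identity j
  have hj1 : (0:ℝ) < (j:ℝ) + 1/2 := by positivity
  have hj2 : (0:ℝ) < (j:ℝ) + 3/2 := by positivity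
  have hX : (0:ℝ) < ((j:ℝ) + 1/2) * ((j:ℝ) + 3/2) := mul_pos hj1 hj2
  have key : cj j ≤ (3/4) / (((j:ℝ) + 1/2) * ((j:ℝ) + 3/2)) := by
    rw [cj, div_le_div_iff₀ (by positivity) (by positivity)]
    have h6 : (ascPochhammer ℝ j).eval (1/2 : ℝ) * ((ascPochhammer ℝ j).eval (1/2 : ℝ)
          * (((j:ℝ) + 1/2) * ((j:ℝ) + 3/2)))
        ≤ (Nat.factorial j : ℝ) * ((ascPochhammer ℝ j).eval (1/2 : ℝ)
          * (((j:ℝ) + 1/2) * ((j:ℝ) + 3/2))) :=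
      mul_le_mul_of_nonneg_right h4 (by positivity)
    nlinarith [h5, h6]
  refine key.trans ?_
  rw [div_le_div_iff₀ (by positivity) (by positivity)]
  nlinarith [sq_nonneg ((j:ℝ) + 1)]

lemma summable_bound : Summable (fun j : ℕ => 1 / ((j:ℝ) + 1) ^ 2) := by
  have := (summable_nat_add_iff (f := fun n : ℕ => 1 / (n:ℝ) ^ 2) 1).mpr
    (Real.summable_one_div_nat_pow.mpr one_lt_two)
  exact this.congr (by intro n; push_cast; ring_nf)

lemma summable_cj_pow {v : ℝ} (hv0 : 0 ≤ v) (hv1 : v ≤ 1) :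
    Summable (fun j : ℕ => cj j * v ^ (2 * j + 1)) := by
  apply Summable.of_nonneg_of_le
    (fun j => mul_nonneg (cj_nonneg j) (by positivity))
    (fun j => ?_) summable_bound
  calc cj j * v ^ (2 * j + 1) ≤ cj j * 1 := by
        apply mul_le_mul_of_nonneg_left _ (cj_nonneg j)
        exact pow_le_one₀ hv0 hv1
    _ = cj j := mul_one _
    _ ≤ 1 / ((j:ℝ) + 1) ^ 2 := cj_le j

lemma Fqmc_eq (v : ℝ) :
    Fqmc v = ∑' j : ℕ, (8 / (3 * Real.pi)) * (cj j * v ^ (2 * j + 1)) := by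
  unfold Fqmc hyp2F1
  rw [mul_assoc, ← tsum_mul_left, ← tsum_mul_left]
  apply tsum_congr
  intro j
  rw [show ((v:ℝ) ^ 2) ^ j = v ^ (2 * j) by rw [← pow_mul]]
  rw [show (v:ℝ) ^ (2 * j + 1) = v ^ (2*j) * v by rw [pow_succ]]
  unfold cj
  ring

theorem F_convexOn : ConvexOn ℝ (Set.Icc (0 : ℝ) 1) Fqmc := by
  have hK : (0:ℝ) ≤ 8 / (3 * Real.pi) := by positivity
  refine ⟨convex_Icc 0 1, ?_⟩
  rintro x ⟨hx0, hx1⟩ y ⟨hy0, hy1⟩ a b ha hb hab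
  simp only [smul_eq_mul]
  have hz0 : 0 ≤ a * x + b * y := by positivity
  have hz1 : a * x + b * y ≤ 1 := by nlinarith
  have hSx := summable_cj_pow hx0 hx1
  have hSy := summable_cj_pow hy0 hy1
  have hSz := summable_cj_pow hz0 hz1
  rw [Fqmc_eq, Fqmc_eq, Fqmc_eq, ← tsum_mul_left, ← tsum_mul_left,
    ← Summable.tsum_add ((hSx.mul_left _).mul_left a) ((hSy.mul_left _).mul_left b)]
  apply Summable.tsum_le_tsum _ ((hSz.mul_left _))
    (((hSx.mul_left _).mul_left a).add ((hSy.mul_left _).mul_left b))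
  intro j
  have hconv := (convexOn_pow (2 * j + 1) : ConvexOn ℝ (Set.Ici 0) fun t : ℝ => t ^ (2*j+1))
  have := hconv.2 (Set.mem_Ici.mpr hx0) (Set.mem_Ici.mpr hy0) ha hb hab
  simp only [smul_eq_mul] at this
  have hc : 0 ≤ cj j := cj_nonneg j
  nlinarith [mul_le_mul_of_nonneg_left this (mul_nonneg hK hc)]
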